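/- arXiv:2411.06185 — 2 statements merged into one kernel-verified Lean document; each statement's English description precedes it below -/
import Mathlib

section
/- Let ξ be a random variable taking values in {0, λ} with λ > 0, and let c be a real-valued random variable on the same probability space. Then the essential infimum over random variables Q of E[Q·ξ + λ·(c − Q)⁺] equals E[ξ·c], and it is attained by Q = c. -/
open MeasureTheory

theorem stmt_2 {Ω : Type*} [MeasurableSpace Ω] (μ : Measure Ω) [IsProbabilityMeasure μ]
    (lam : ℝ) (hlam : 0 < lam) (ξ c : Ω → ℝ)
    (hξ : ∀ ω, ξ ω = 0 ∨ ξ ω = lam)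
    (hc : Integrable c μ)
    (hξc : Integrable (fun ω => ξ ω * c ω) μ) :
    (∀ Q : Ω → ℝ,
        Integrable (fun ω => Q ω * ξ ω + lam * max (c ω - Q ω) 0) μ →
        ∫ ω, ξ ω * c ω ∂μ ≤ ∫ ω, (Q ω * ξ ω + lam * max (c ω - Q ω) 0) ∂μ) ∧
    ∫ ω, (c ω * ξ ω + lam * max (c ω - c ω) 0) ∂μ = ∫ ω, ξ ω * c ω ∂μ := by
  constructor
  · intro Q hQ
    refine integral_mono hξc hQ fun ω => ?_
    rcases hξ ω with h | h
    · simp only [h, mul_zero, zero_mul, zero_add]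
      positivity
    · rw [h]
      have h1 : c ω - Q ω ≤ max (c ω - Q ω) 0 := le_max_left _ _
      nlinarith [le_max_left (c ω - Q ω) 0]
  · simp [mul_comm]
end

section
/- Fix positive constants γⁱ, μⁱ, σⁱ, c and ρⁱ ∈ (0,1) for i = 1,…,n. Suppose δ = (δ¹,…,δⁿ) ∈ ℝⁿ satisfies, for each i, γⁱ((μⁱ)² + (σⁱ)²)·δⁱ = −c·((σⁱ)²(1−ρⁱ)·δⁱ + σⁱ√ρⁱ·S), where S = Σ_j σʲ√ρʲ·δʲ. Then δⁱ = 0 for all i. -/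
theorem stmt_16 (n : ℕ) (γ μ σ : Fin n → ℝ) (ρ : Fin n → ℝ) (c : ℝ)
    (hγ : ∀ i, 0 < γ i) (hμ : ∀ i, 0 < μ i) (hσ : ∀ i, 0 < σ i)
    (hρ : ∀ i, ρ i ∈ Set.Ioo (0 : ℝ) 1) (hc : 0 < c)
    (δ : Fin n → ℝ)
    (heq : ∀ i, γ i * ((μ i) ^ 2 + (σ i) ^ 2) * δ i =
      -c * ((σ i) ^ 2 * (1 - ρ i) * δ i +
        σ i * Real.sqrt (ρ i) * ∑ j, σ j * Real.sqrt (ρ j) * δ j)) :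
    ∀ i, δ i = 0 := by
  set S := ∑ j, σ j * Real.sqrt (ρ j) * δ j with hS
  set A : Fin n → ℝ := fun i => γ i * ((μ i) ^ 2 + (σ i) ^ 2) + c * (σ i) ^ 2 * (1 - ρ i)
    with hA
  have hApos : ∀ i, 0 < A i := fun i => by
    have := (hρ i).2
    have hgi := hγ i
    have hsi := hσ i
    have hci := hc
    have h1 : 0 < γ i * ((μ i) ^ 2 + (σ i) ^ 2) := by positivity
    have h2 : 0 ≤ c * (σ i) ^ 2 * (1 - ρ i) := by
      have : 0 ≤ 1 - ρ i := by linarith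
      positivity
    simp only [hA]; linarith
  have hkey : ∀ i, A i * δ i = -c * (σ i * Real.sqrt (ρ i) * S) := fun i => by
    have := heq i
    simp only [hA]; ring_nf; ring_nf at this; linarith
  have hsum : ∑ i, A i * δ i ^ 2 = -c * S ^ 2 := by
    have : ∑ i, A i * δ i ^ 2 = ∑ i, (A i * δ i) * δ i := by
      apply Finset.sum_congr rfl; intro i _; ring
    rw [this]
    have : ∑ i, (A i * δ i) * δ i = ∑ i, (-c * (σ i * Real.sqrt (ρ i) * S)) * δ i := by
      apply Finset.sum_congr rfl; intro i _; rw [hkey i]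
    rw [this]
    have : ∑ i, (-c * (σ i * Real.sqrt (ρ i) * S)) * δ i
        = (-c * S) * ∑ i, σ i * Real.sqrt (ρ i) * δ i := by
      rw [Finset.mul_sum]; apply Finset.sum_congr rfl; intro i _; ring
    rw [this, ← hS]; ring
  have hnn : ∀ i ∈ Finset.univ, 0 ≤ A i * δ i ^ 2 := fun i _ =>
    mul_nonneg (hApos i).le (sq_nonneg _)
  have hle : ∑ i, A i * δ i ^ 2 ≤ 0 := by
    rw [hsum]
    have : 0 ≤ c * S ^ 2 := by positivity
    linarith
  have hzero : ∑ i, A i * δ i ^ 2 = 0 :=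
    le_antisymm hle (Finset.sum_nonneg hnn)
  intro i
  have := (Finset.sum_eq_zero_iff_of_nonneg hnn).mp hzero i (Finset.mem_univ i)
  have hδ2 : δ i ^ 2 = 0 := by
    rcases mul_eq_zero.mp this with h | h
    · exact absurd h (hApos i).ne'
    · exact h
  exact pow_eq_zero_iff (by norm_num) |>.mp hδ2
end
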